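/- Let L be a Lipschitz seminorm on M_d, let Φ : M_d → M_d be a unital completely positive map, and let E : M_d → M_d be a Hermitian-preserving linear map satisfying Φ ∘ E = E ∘ Φ = E. Assume Cost_L(E) < ∞. Then Cost_L(Φ) ≥ (1 − Lip_L(Φ)) · Cost_L(E). (The inequality is trivial when Lip_L(Φ) ≥ 1; the content is that a strict Lipschitz contraction forces the transportation cost of Φ to be at least a fixed fraction of the cost of E.) -/

import Mathlib

open scoped ENNReal NNReal ComplexOrder Matrix Matrix.Norms.L2Operator Kronecker

noncomputable section

/-- The amplification `id_{M_n} ⊗ Φ` of a map on matrices, acting blockwise. -/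
def ampFun {ι : Type*} (Φ : Matrix ι ι ℂ → Matrix ι ι ℂ) (n : ℕ)
    (X : Matrix (Fin n × ι) (Fin n × ι) ℂ) : Matrix (Fin n × ι) (Fin n × ι) ℂ :=
  Matrix.of fun p q => Φ (Matrix.of fun k l => X (p.1, k) (q.1, l)) p.2 q.2

/-- A unital completely positive map on `Matrix ι ι ℂ`: a linear map sending `1` to `1`
all of whose amplifications preserve positive semidefiniteness. -/
structure IsUCP {ι : Type*} [Fintype ι] [DecidableEq ι]
    (Φ : Matrix ι ι ℂ → Matrix ι ι ℂ) : Prop where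
  map_add : ∀ x y, Φ (x + y) = Φ x + Φ y
  map_smul : ∀ (c : ℂ) (x), Φ (c • x) = c • Φ x
  unital : Φ 1 = 1
  cp : ∀ (n : ℕ) (X : Matrix (Fin n × ι) (Fin n × ι) ℂ),
    X.PosSemidef → (ampFun Φ n X).PosSemidef

/-- Transportation cost of a map `Φ` w.r.t. a seminorm `L`, valued in `[0,∞]`. -/
def Cost {ι : Type*} [Fintype ι] [DecidableEq ι] (L : Matrix ι ι ℂ → ℝ)
    (Φ : Matrix ι ι ℂ → Matrix ι ι ℂ) : ℝ≥0∞ :=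
  ⨆ x ∈ {x : Matrix ι ι ℂ | x.IsHermitian ∧ L x ≤ 1}, ENNReal.ofReal ‖Φ x - x‖

/-- Lipschitz constant of a map `Φ` w.r.t. a seminorm `L`, valued in `[0,∞]`. -/
def Lip {ι : Type*} [Fintype ι] [DecidableEq ι] (L : Matrix ι ι ℂ → ℝ)
    (Φ : Matrix ι ι ℂ → Matrix ι ι ℂ) : ℝ≥0∞ :=
  ⨆ x ∈ {x : Matrix ι ι ℂ | x.IsHermitian ∧ L x ≤ 1}, ENNReal.ofReal (L (Φ x))

/-- Commutator seminorm `|||x|||_S = max_{s ∈ S} ‖s*x - x*s‖` (operator norm). -/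
def cnorm {ι : Type*} [Fintype ι] [DecidableEq ι] (S : Finset (Matrix ι ι ℂ))
    (x : Matrix ι ι ℂ) : ℝ :=
  ((S.sup fun s => ‖s * x - x * s‖₊ : ℝ≥0) : ℝ)

/-- Amplified commutator seminorm `|||X|||_{S,n} = max_{s∈S} ‖(1ₙ⊗s)X - X(1ₙ⊗s)‖` on
`M_n ⊗ M_ι`. -/
def cnormAmp {ι : Type*} [Fintype ι] [DecidableEq ι] (S : Finset (Matrix ι ι ℂ)) (n : ℕ)
    (X : Matrix (Fin n × ι) (Fin n × ι) ℂ) : ℝ :=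
  ((S.sup fun s => ‖((1 : Matrix (Fin n) (Fin n) ℂ) ⊗ₖ s) * X
      - X * ((1 : Matrix (Fin n) (Fin n) ℂ) ⊗ₖ s)‖₊ : ℝ≥0) : ℝ)

/-- Complete transportation cost w.r.t. the commutator seminorms of `S`. -/
def Costcb {ι : Type*} [Fintype ι] [DecidableEq ι] (S : Finset (Matrix ι ι ℂ))
    (Φ : Matrix ι ι ℂ → Matrix ι ι ℂ) : ℝ≥0∞ :=
  ⨆ (n : ℕ), ⨆ X ∈ {X : Matrix (Fin n × ι) (Fin n × ι) ℂ |
      X.IsHermitian ∧ cnormAmp S n X ≤ 1}, ENNReal.ofReal ‖ampFun Φ n X - X‖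

/-- Complete Lipschitz constant w.r.t. the commutator seminorms of `S`. -/
def Lipcb {ι : Type*} [Fintype ι] [DecidableEq ι] (S : Finset (Matrix ι ι ℂ))
    (Φ : Matrix ι ι ℂ → Matrix ι ι ℂ) : ℝ≥0∞ :=
  ⨆ (n : ℕ), ⨆ X ∈ {X : Matrix (Fin n × ι) (Fin n × ι) ℂ |
      X.IsHermitian ∧ cnormAmp S n X ≤ 1}, ENNReal.ofReal (cnormAmp S n (ampFun Φ n X))

/-!
Since `E = E ∘ Φ`, for Hermitian `x` with `L x ≤ 1` the triangle inequality through `Φ x` gives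
`‖E x - x‖ ≤ ‖E (Φ x) - Φ x‖ + ‖Φ x - x‖ ≤ Cost(E) · L(Φ x) + Cost(Φ) ≤ Cost(E) · Lip(Φ) + Cost(Φ)`,
where `Φ x` is again Hermitian because `Φ` is positive, and the middle bound uses that `Cost(E)` is
finite, so that `‖E y - y‖ ≤ Cost(E) · L(y)` by homogeneity. Taking the supremum over `x`,
`Cost(E) ≤ Lip(Φ) · Cost(E) + Cost(Φ)`, which rearranges to the claim.
-/

open scoped MatrixOrder

namespace IsUCP

variable {ι : Type*} [Fintype ι] [DecidableEq ι] {Φ : Matrix ι ι ℂ → Matrix ι ι ℂ}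

-- `Φ y` is, definitionally, the only block of the first amplification of `y`.
theorem posSemidef_map (hΦ : IsUCP Φ) {y : Matrix ι ι ℂ} (hy : y.PosSemidef) :
    (Φ y).PosSemidef :=
  (hΦ.cp 1 (y.submatrix Prod.snd Prod.snd) (hy.submatrix _)).submatrix
    fun i : ι => ((0 : Fin 1), i)

def toPositiveLinearMap (hΦ : IsUCP Φ) : Matrix ι ι ℂ →ₚ[ℂ] Matrix ι ι ℂ :=
  .mk₀ ⟨⟨Φ, hΦ.map_add⟩, hΦ.map_smul⟩ fun _ hy =>
    (hΦ.posSemidef_map (Matrix.nonneg_iff_posSemidef.mp hy)).nonneg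

theorem isHermitian_map (hΦ : IsUCP Φ) {x : Matrix ι ι ℂ} (hx : x.IsHermitian) :
    (Φ x).IsHermitian :=
  hx.isSelfAdjoint.map' hΦ.toPositiveLinearMap

end IsUCP

section CostLip

variable {ι : Type*} [Fintype ι] [DecidableEq ι] {L : Matrix ι ι ℂ → ℝ}
  {Θ : Matrix ι ι ℂ → Matrix ι ι ℂ}

theorem ofReal_norm_sub_le_cost {x : Matrix ι ι ℂ} (hx : x.IsHermitian) (hLx : L x ≤ 1) :
    ENNReal.ofReal ‖Θ x - x‖ ≤ Cost L Θ :=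
  le_iSup₂ (f := fun x (_ : x ∈ {x : Matrix ι ι ℂ | x.IsHermitian ∧ L x ≤ 1}) =>
    ENNReal.ofReal ‖Θ x - x‖) x ⟨hx, hLx⟩

theorem ofReal_le_lip {x : Matrix ι ι ℂ} (hx : x.IsHermitian) (hLx : L x ≤ 1) :
    ENNReal.ofReal (L (Θ x)) ≤ Lip L Θ :=
  le_iSup₂ (f := fun x (_ : x ∈ {x : Matrix ι ι ℂ | x.IsHermitian ∧ L x ≤ 1}) =>
    ENNReal.ofReal (L (Θ x))) x ⟨hx, hLx⟩

theorem norm_sub_le_toReal_cost_mul (hL_smul : ∀ (c : ℂ) (x), L (c • x) = ‖c‖ * L x)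
    (hΘ : ∀ (c : ℂ) (x), Θ (c • x) = c • Θ x) (hfin : Cost L Θ ≠ ⊤)
    {y : Matrix ι ι ℂ} (hy : y.IsHermitian) (hLy : 0 ≤ L y) :
    ‖Θ y - y‖ ≤ (Cost L Θ).toReal * L y := by
  have bound : ∀ t, L y < t → ‖Θ y - y‖ ≤ (Cost L Θ).toReal * t := by
    intro t ht
    have ht0 : 0 < t := hLy.trans_lt ht
    have hc : ‖((t⁻¹ : ℝ) : ℂ)‖ = t⁻¹ := by simp [ht0.le]
    have hLty : L (((t⁻¹ : ℝ) : ℂ) • y) ≤ 1 := by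
      rw [hL_smul, hc, inv_mul_le_iff₀ ht0, mul_one]; exact ht.le
    have h := ofReal_norm_sub_le_cost (hy.smul (Complex.conj_ofReal _)) hLty (Θ := Θ)
    rwa [hΘ, ← smul_sub, norm_smul, hc, ENNReal.ofReal_le_iff_le_toReal hfin,
      inv_mul_le_iff₀ ht0, mul_comm] at h
  exact ge_of_tendsto ((continuous_const.mul continuous_id).tendsto (L y) |>.mono_left
    nhdsWithin_le_nhds) (eventually_nhdsWithin_of_forall (s := Set.Ioi (L y)) bound)

theorem cost_le_cost_mul_lip_add_cost (hL_nonneg : ∀ x, 0 ≤ L x)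
    (hL_smul : ∀ (c : ℂ) (x), L (c • x) = ‖c‖ * L x) {Φ E : Matrix ι ι ℂ → Matrix ι ι ℂ}
    (hΦ : ∀ x, x.IsHermitian → (Φ x).IsHermitian) (hE : ∀ (c : ℂ) (x), E (c • x) = c • E x)
    (hEΦ : ∀ x, E (Φ x) = E x) (hfin : Cost L E ≠ ⊤) :
    Cost L E ≤ Cost L E * Lip L Φ + Cost L Φ := by
  refine iSup₂_le fun x ⟨hx, hLx⟩ => ?_
  have hΦx := hΦ x hx
  have hEΦx : ENNReal.ofReal ‖E (Φ x) - Φ x‖ ≤ Cost L E * Lip L Φ := calc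
    _ ≤ ENNReal.ofReal ((Cost L E).toReal * L (Φ x)) := ENNReal.ofReal_le_ofReal
        (norm_sub_le_toReal_cost_mul hL_smul hE hfin hΦx (hL_nonneg _))
    _ = Cost L E * ENNReal.ofReal (L (Φ x)) := by
        rw [ENNReal.ofReal_mul ENNReal.toReal_nonneg, ENNReal.ofReal_toReal hfin]
    _ ≤ Cost L E * Lip L Φ := by gcongr; exact ofReal_le_lip hx hLx
  calc ENNReal.ofReal ‖E x - x‖
      ≤ ENNReal.ofReal (‖E (Φ x) - Φ x‖ + ‖Φ x - x‖) := by
        rw [← hEΦ x]; exact ENNReal.ofReal_le_ofReal (norm_sub_le_norm_sub_add_norm_sub _ _ _)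
    _ = ENNReal.ofReal ‖E (Φ x) - Φ x‖ + ENNReal.ofReal ‖Φ x - x‖ :=
        ENNReal.ofReal_add (norm_nonneg _) (norm_nonneg _)
    _ ≤ Cost L E * Lip L Φ + Cost L Φ := add_le_add hEΦx (ofReal_norm_sub_le_cost hx hLx)

end CostLip

theorem cost_ge_one_sub_lip_mul_cost_general {d : ℕ}
    (L : Matrix (Fin d) (Fin d) ℂ → ℝ)
    (hL_nonneg : ∀ x, 0 ≤ L x)
    (hL_smul : ∀ (c : ℂ) (x), L (c • x) = ‖c‖ * L x)
    (Φ E : Matrix (Fin d) (Fin d) ℂ → Matrix (Fin d) (Fin d) ℂ)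
    (hΦ : IsUCP Φ)
    (hE_lin : ∀ (c : ℂ) (x y), E (c • x + y) = c • E x + E y)
    (hEΦ : ∀ x, E (Φ x) = E x)
    (hfin : Cost L E ≠ ⊤) :
    (1 - Lip L Φ) * Cost L E ≤ Cost L Φ := by
  have hE0 : E 0 = 0 := by simpa using hE_lin (-1) 0 0
  have hE_smul : ∀ (c : ℂ) (x), E (c • x) = c • E x := fun c x => by
    simpa [hE0] using hE_lin c x 0
  have key := cost_le_cost_mul_lip_add_cost hL_nonneg hL_smul (fun _ => hΦ.isHermitian_map)
    hE_smul hEΦ hfin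
  rw [ENNReal.sub_mul fun _ _ => hfin, one_mul, tsub_le_iff_right]
  rwa [mul_comm, add_comm]

/-- If `Φ` is UCP, `E` is Hermitian-preserving with
`Φ ∘ E = E ∘ Φ = E` and `Cost_L(E) < ∞`, then
`Cost_L(Φ) ≥ (1 - Lip_L(Φ)) · Cost_L(E)` (truncated subtraction in `[0,∞]`). -/
theorem cost_ge_one_sub_lip_mul_cost {d : ℕ}
    (L : Matrix (Fin d) (Fin d) ℂ → ℝ)
    (hL_nonneg : ∀ x, 0 ≤ L x)
    (hL_add : ∀ x y, L (x + y) ≤ L x + L y)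
    (hL_smul : ∀ (c : ℂ) (x), L (c • x) = ‖c‖ * L x)
    (hL_one : L 1 = 0)
    (hL_star : ∀ x, L xᴴ = L x)
    (Φ E : Matrix (Fin d) (Fin d) ℂ → Matrix (Fin d) (Fin d) ℂ)
    (hΦ : IsUCP Φ)
    (hE_lin : ∀ (c : ℂ) (x y), E (c • x + y) = c • E x + E y)
    (hE_herm : ∀ x, (E x)ᴴ = E xᴴ)
    (hΦE : ∀ x, Φ (E x) = E x)
    (hEΦ : ∀ x, E (Φ x) = E x)
    (hfin : Cost L E ≠ ⊤) :
    (1 - Lip L Φ) * Cost L E ≤ Cost L Φ :=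
  cost_ge_one_sub_lip_mul_cost_general L hL_nonneg hL_smul Φ E hΦ hE_lin hEΦ hfin

end
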